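/- Let K be a field, let (V, c) be a braided vector space over K such that c is of Hecke type of mark λ with λ ≠ 0 and λ ≠ 1, and let b be a c-bracket on (V, c). Then b is either zero or surjective. -/

import Mathlib

open TensorProduct

noncomputable section

variable {K : Type*} [Field K] {V : Type*} [AddCommGroup V] [Module K V]

/-- The endomorphism `c ⊗ id_V` of `V ⊗ (V ⊗ V)` (transported along associativity). -/
def opC1 (c : V ⊗[K] V →ₗ[K] V ⊗[K] V) :
    V ⊗[K] (V ⊗[K] V) →ₗ[K] V ⊗[K] (V ⊗[K] V) :=
  (TensorProduct.assoc K V V V).toLinearMap ∘ₗ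
    LinearMap.rTensor V c ∘ₗ (TensorProduct.assoc K V V V).symm.toLinearMap

/-- The endomorphism `id_V ⊗ c` of `V ⊗ (V ⊗ V)`. -/
def opC2 (c : V ⊗[K] V →ₗ[K] V ⊗[K] V) :
    V ⊗[K] (V ⊗[K] V) →ₗ[K] V ⊗[K] (V ⊗[K] V) :=
  LinearMap.lTensor V c

/-- The map `b ⊗ id_V : V ⊗ (V ⊗ V) → V ⊗ V`. -/
def opB1 (b : V ⊗[K] V →ₗ[K] V) :
    V ⊗[K] (V ⊗[K] V) →ₗ[K] V ⊗[K] V :=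
  LinearMap.rTensor V b ∘ₗ (TensorProduct.assoc K V V V).symm.toLinearMap

/-- The map `id_V ⊗ b : V ⊗ (V ⊗ V) → V ⊗ V`. -/
def opB2 (b : V ⊗[K] V →ₗ[K] V) :
    V ⊗[K] (V ⊗[K] V) →ₗ[K] V ⊗[K] V :=
  LinearMap.lTensor V b

/-- The braid equation `c₁ ∘ c₂ ∘ c₁ = c₂ ∘ c₁ ∘ c₂`. -/
def BraidEq (c : V ⊗[K] V →ₗ[K] V ⊗[K] V) : Prop :=
  opC1 c ∘ₗ opC2 c ∘ₗ opC1 c = opC2 c ∘ₗ opC1 c ∘ₗ opC2 c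

/-- `c` is of Hecke type of mark `lam`: `(c + id) ∘ (c - lam • id) = 0`. -/
def IsHecke (lam : K) (c : V ⊗[K] V →ₗ[K] V ⊗[K] V) : Prop :=
  (c + LinearMap.id) ∘ₗ (c - lam • LinearMap.id) = 0

/-- `b` is a `c`-bracket: `c ∘ b₁ = b₂ ∘ c₁ ∘ c₂` and `c ∘ b₂ = b₁ ∘ c₂ ∘ c₁`. -/
def IsBracket (c : V ⊗[K] V →ₗ[K] V ⊗[K] V) (b : V ⊗[K] V →ₗ[K] V) : Prop :=
  c ∘ₗ opB1 b = opB2 b ∘ₗ opC1 c ∘ₗ opC2 c ∧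
  c ∘ₗ opB2 b = opB1 b ∘ₗ opC2 c ∘ₗ opC1 c

/-- The linear map `V ⊗ V → T(V)`, `v ⊗ w ↦ ι v * ι w`. -/
def tensMul : V ⊗[K] V →ₗ[K] TensorAlgebra K V :=
  LinearMap.mul' K (TensorAlgebra K V) ∘ₗ
    TensorProduct.map (TensorAlgebra.ι K) (TensorAlgebra.ι K)

/-- The relation on `T(V)` whose associated ring quotient is
`U(V,c,b) = T(V)/(c(z) - lam•z - b(z) : z ∈ V ⊗ V)`. -/
def envRel (lam : K) (c : V ⊗[K] V →ₗ[K] V ⊗[K] V) (b : V ⊗[K] V →ₗ[K] V) :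
    TensorAlgebra K V → TensorAlgebra K V → Prop :=
  fun x y => ∃ z : V ⊗[K] V,
    x = tensMul (c z) ∧ y = lam • tensMul z + TensorAlgebra.ι K (b z)

/-- The canonical map `ι_{c,b} : V → U(V,c,b)`. -/
def envIota (lam : K) (c : V ⊗[K] V →ₗ[K] V ⊗[K] V) (b : V ⊗[K] V →ₗ[K] V) :
    V →ₗ[K] RingQuot (envRel lam c b) :=
  (RingQuot.mkAlgHom K (envRel lam c b)).toLinearMap ∘ₗ TensorAlgebra.ι K

/-- The q-integer `(n)_lam = 1 + lam + ⋯ + lam^(n-1)`. -/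
def qInt (lam : K) (n : ℕ) : K := ∑ i ∈ Finset.range n, lam ^ i

/-- The q-factorial `(n)!_lam = (1)_lam (2)_lam ⋯ (n)_lam`. -/
def qFac (lam : K) (n : ℕ) : K := ∏ i ∈ Finset.range n, qInt lam (i + 1)

/-!
The Hecke relation makes `c` invertible (as `lam ≠ 0`), so the two bracket identities say that
`c` maps `range b₁ = im b ⊗ V` onto `range b₂ = V ⊗ im b` and back. Since `lam ≠ 1`, two
subspaces swapped by `c` coincide; and `im b ⊗ V = V ⊗ im b` forces `im b = 0` or `im b = V`.
-/

namespace IsHecke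

variable {lam : K} {c : V ⊗[K] V →ₗ[K] V ⊗[K] V}

lemma apply_apply (hc : IsHecke lam c) (x : V ⊗[K] V) :
    c (c x) = lam • c x - c x + lam • x := by
  have h := LinearMap.congr_fun hc x
  simp only [LinearMap.comp_apply, LinearMap.sub_apply, LinearMap.add_apply,
    LinearMap.smul_apply, LinearMap.id_apply, LinearMap.zero_apply, map_sub, map_smul] at h
  linear_combination (norm := module) h

/-- The Hecke relation exhibits `c⁻¹ = lam⁻¹ • (c + 1 - lam)`. -/
lemma surjective (hc : IsHecke lam c) (hlam0 : lam ≠ 0) : Function.Surjective c := by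
  intro y
  refine ⟨lam⁻¹ • (c y + y - lam • y), ?_⟩
  rw [map_smul, map_sub, map_add, map_smul, hc.apply_apply]
  match_scalars
  · field_simp
    ring
  · field_simp

/-- `(lam - 1) • c x = c (c x) - lam • x`, so `c x ∈ P` as soon as `x` and `c (c x)` are. -/
lemma le_of_map_eq_of_map_eq (hc : IsHecke lam c) (hlam1 : lam ≠ 1)
    {P Q : Submodule K (V ⊗[K] V)} (hPQ : P.map c = Q) (hQP : Q.map c = P) : Q ≤ P := by
  rw [← hPQ]
  rintro _ ⟨x, hx, rfl⟩
  have hccx : c (c x) ∈ P :=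
    hQP ▸ Submodule.mem_map_of_mem (hPQ ▸ Submodule.mem_map_of_mem hx)
  have hsub : c x = (lam - 1)⁻¹ • (c (c x) - lam • x) := by
    rw [hc.apply_apply, eq_inv_smul_iff₀ (sub_ne_zero.mpr hlam1)]
    module
  rw [hsub]
  exact P.smul_mem _ (P.sub_mem hccx (P.smul_mem lam hx))

lemma eq_of_map_eq_of_map_eq (hc : IsHecke lam c) (hlam1 : lam ≠ 1)
    {P Q : Submodule K (V ⊗[K] V)} (hPQ : P.map c = Q) (hQP : Q.map c = P) : P = Q :=
  le_antisymm (hc.le_of_map_eq_of_map_eq hlam1 hQP hPQ) (hc.le_of_map_eq_of_map_eq hlam1 hPQ hQP)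

end IsHecke

lemma opC1_surjective {c : V ⊗[K] V →ₗ[K] V ⊗[K] V} (hc : Function.Surjective c) :
    Function.Surjective (opC1 c) :=
  (TensorProduct.assoc K V V V).surjective.comp
    ((LinearMap.rTensor_surjective V hc).comp (TensorProduct.assoc K V V V).symm.surjective)

lemma opC2_surjective {c : V ⊗[K] V →ₗ[K] V ⊗[K] V} (hc : Function.Surjective c) :
    Function.Surjective (opC2 c) :=
  LinearMap.lTensor_surjective V hc

lemma range_opB1 (b : V ⊗[K] V →ₗ[K] V) :
    LinearMap.range (opB1 b) = LinearMap.range (b.rTensor V) :=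
  LinearMap.range_comp_of_range_eq_top _ (LinearEquiv.range _)

namespace IsBracket

variable {c : V ⊗[K] V →ₗ[K] V ⊗[K] V} {b : V ⊗[K] V →ₗ[K] V}

lemma map_range_opB1 (hb : IsBracket c b) (hc : Function.Surjective c) :
    (LinearMap.range (opB1 b)).map c = LinearMap.range (opB2 b) := by
  rw [← LinearMap.range_comp, hb.1, LinearMap.range_comp_of_range_eq_top]
  exact LinearMap.range_eq_top.mpr ((opC1_surjective hc).comp (opC2_surjective hc))

lemma map_range_opB2 (hb : IsBracket c b) (hc : Function.Surjective c) :
    (LinearMap.range (opB2 b)).map c = LinearMap.range (opB1 b) := by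
  rw [← LinearMap.range_comp, hb.2, LinearMap.range_comp_of_range_eq_top]
  exact LinearMap.range_eq_top.mpr ((opC2_surjective hc).comp (opC1_surjective hc))

end IsBracket

/-- With `f z ≠ 0` and `v ∉ range f`, the vector `f z ⊗ v` lies in `range f ⊗ V`, but is not
killed by `id ⊗ φ` for a functional `φ` vanishing on `range f` with `φ v ≠ 0`, which kills
`V ⊗ range f`. -/
lemma LinearMap.eq_zero_or_surjective_of_range_rTensor_eq_range_lTensor
    {U : Type*} [AddCommGroup U] [Module K U] (f : U →ₗ[K] V)
    (h : LinearMap.range (f.rTensor V) = LinearMap.range (f.lTensor V)) :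
    f = 0 ∨ Function.Surjective f := by
  by_contra! hf
  obtain ⟨z, hz⟩ : ∃ z, f z ≠ 0 := by
    by_contra! h0
    exact hf.1 (LinearMap.ext h0)
  obtain ⟨v, hv⟩ : ∃ v, v ∉ LinearMap.range f := by
    simpa [Function.Surjective] using hf.2
  obtain ⟨φ, hφv, hφW⟩ := Submodule.exists_dual_map_eq_bot_of_notMem hv inferInstance
  have hφf : φ ∘ₗ f = 0 := by
    rw [← LinearMap.range_eq_bot, LinearMap.range_comp, hφW]
  obtain ⟨y, hy⟩ : f z ⊗ₜ[K] v ∈ LinearMap.range (f.lTensor V) :=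
    h ▸ ⟨z ⊗ₜ v, rfl⟩
  have hzero : φ.lTensor V (f z ⊗ₜ[K] v) = 0 := by
    rw [← hy, ← LinearMap.comp_apply, ← LinearMap.lTensor_comp, hφf, LinearMap.lTensor_zero,
      LinearMap.zero_apply]
  have hrid := congrArg (TensorProduct.rid K V) hzero
  rw [LinearMap.lTensor_tmul, TensorProduct.rid_tmul, map_zero] at hrid
  exact smul_ne_zero hφv hz hrid

theorem bracket_eq_zero_or_surjective
    (lam : K) (hlam0 : lam ≠ 0) (hlam1 : lam ≠ 1)
    (c : V ⊗[K] V →ₗ[K] V ⊗[K] V) (hHecke : IsHecke lam c)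
    (b : V ⊗[K] V →ₗ[K] V) (hb : IsBracket c b) :
    b = 0 ∨ Function.Surjective b := by
  have hc := hHecke.surjective hlam0
  refine b.eq_zero_or_surjective_of_range_rTensor_eq_range_lTensor ?_
  rw [← range_opB1]
  exact hHecke.eq_of_map_eq_of_map_eq hlam1 (hb.map_range_opB1 hc) (hb.map_range_opB2 hc)

end
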